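/- For any u⁰∈L²(𝕋), λ∈ℝ, M₀∈ℝ, τ>0 and N≥1, the sequence (u^n) defined from u^0=u⁰ by Scheme (A), u^{n+1}=Π^τ[e^{iτ∂_x²}e^{−4πiλM₀τ}u^n]+Π_τe^{i(τ/2)∂_x²}N_τ[e^{i(τ/2)∂_x²}Π_τu^n], has nonincreasing mass: ‖u^{n+1}‖_{L²(𝕋)} ≤ ‖u^n‖_{L²(𝕋)} for every n≥0, and in particular ‖u^n‖_{L²(𝕋)} ≤ ‖u⁰‖_{L²(𝕋)}. -/

import Mathlib

open MeasureTheory Real Set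
open scoped ENNReal

noncomputable section

instance fact2pi : Fact (0 < 2 * π) := ⟨by positivity⟩

abbrev Torus : Type := AddCircle (2 * π)

def mult (m : ℤ → ℂ) (f : Torus → ℂ) : Torus → ℂ :=
  fun x => ∑' k : ℤ, m k * fourierCoeff f k * fourier k x

def linProp (t : ℝ) : (Torus → ℂ) → (Torus → ℂ) :=
  mult (fun k => Complex.exp (Complex.I * t * (k : ℂ) ^ 2))

def PiLe (N : ℝ) : (Torus → ℂ) → (Torus → ℂ) :=
  mult (fun k => if (|k| : ℝ) ≤ N then 1 else 0)

def PiGt (N : ℝ) (f : Torus → ℂ) : Torus → ℂ := fun x => f x - PiLe N f x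

def InHs (s : ℝ) (f : Torus → ℂ) : Prop :=
  MemLp f 2 volume ∧
    Summable (fun k : ℤ => (1 + (k : ℝ) ^ 2) ^ s * ‖fourierCoeff f k‖ ^ 2)

def cubicFun (lam : ℝ) (f : Torus → ℂ) : Torus → ℂ :=
  fun x => (lam : ℂ) * ((‖f x‖ ^ 2 : ℝ) : ℂ) * f x

def IsSolution (lam γ T : ℝ) (u0 : Torus → ℂ) (u : ℝ → Torus → ℂ) : Prop :=
  u 0 = u0 ∧ (∀ t ∈ Icc (0 : ℝ) T, InHs γ (u t)) ∧
    ∀ t ∈ Icc (0 : ℝ) T, ∀ x,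
      u t x = linProp t u0 x -
        Complex.I * ∫ s in (0 : ℝ)..t, linProp (t - s) (cubicFun lam (u s)) x

def mass (u0 : Torus → ℂ) : ℝ := (1 / (2 * π)) * ∫ x : Torus, ‖u0 x‖ ^ 2

/-- The pointwise nonlinear flow `N_t(φ) = e^{-iλt|φ|²} φ`. -/
def Nflow (lam t : ℝ) (φ : Torus → ℂ) : Torus → ℂ :=
  fun x => Complex.exp (-Complex.I * lam * t * ((‖φ x‖ ^ 2 : ℝ) : ℂ)) * φ x

/-- The modified flow `Ñ_t(φ) = e^{-iλt|Π_τφ|²} φ`. -/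
def Ntilde (lam t N : ℝ) (φ : Torus → ℂ) : Torus → ℂ :=
  fun x => Complex.exp (-Complex.I * lam * t * ((‖PiLe N φ x‖ ^ 2 : ℝ) : ℂ)) * φ x

/-- Scheme (A). -/
def SchemeA (lam M0 τ N : ℝ) (u0 : Torus → ℂ) (un : ℕ → Torus → ℂ) : Prop :=
  un 0 = u0 ∧ ∀ n : ℕ, un (n + 1) = fun x =>
    PiGt N (linProp τ (fun y => Complex.exp (-(4 * π * M0 * τ) * Complex.I * lam) * un n y)) x
      + PiLe N (linProp (τ / 2) (Nflow lam τ (linProp (τ / 2) (PiLe N (un n))))) x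

/-- Scheme (B). -/
def SchemeB (lam M0 τ N : ℝ) (u0 : Torus → ℂ) (un : ℕ → Torus → ℂ) : Prop :=
  un 0 = u0 ∧ ∀ n : ℕ, un (n + 1) =
    linProp (τ / 2) (Ntilde lam τ N (linProp (τ / 2)
      (fun x => PiLe N (un n) x + Complex.exp (-(2 * π * M0 * τ) * Complex.I * lam) * PiGt N (un n) x)))

/-!
The propagators `e^{it∂ₓ²}` and the projections `Π_τ`, `Π^τ` act on Fourier coefficients by
multipliers of modulus at most one, and the nonlinear flow `N_τ` preserves `|φ|` pointwise. Since
`Π^τ` and `Π_τ` see complementary sets of frequencies, Parseval splits the mass of `u^{n+1}` into a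
high-frequency part, bounded mode by mode by that of `u^n`, and a low-frequency part, bounded by
the mass of `e^{i(τ/2)∂ₓ²} N_τ e^{i(τ/2)∂ₓ²} Π_τ u^n`, hence by the mass of `Π_τ u^n`.
-/

section FourierSeries

lemma norm_fourier_apply {T : ℝ} (n : ℤ) (x : AddCircle T) : ‖fourier n x‖ = 1 := by
  rw [fourier_apply, Circle.norm_coe]

lemma summable_mul_fourier_iff {T : ℝ} {a : ℤ → ℂ} (x : AddCircle T) :
    Summable (fun k => a k * fourier k x) ↔ Summable a := by
  simp only [← summable_norm_iff (E := ℂ), norm_mul, norm_fourier_apply, mul_one]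

lemma tsum_mul_fourier_of_not_summable {T : ℝ} {a : ℤ → ℂ} (ha : ¬Summable a) :
    (fun x : AddCircle T => ∑' k, a k * fourier k x) = 0 :=
  funext fun x => tsum_eq_zero_of_not_summable (mt (summable_mul_fourier_iff x).mp ha)

/-- When `a` is not summable, the `tsum` is the junk value `0` at every point. -/
lemma continuous_tsum_fourier {T : ℝ} (a : ℤ → ℂ) :
    Continuous fun x : AddCircle T => ∑' k, a k * fourier k x := by
  by_cases ha : Summable a
  · exact continuous_tsum (fun k => continuous_const.mul (fourier k).continuous) ha.norm
      fun k x => by rw [norm_mul, norm_fourier_apply, mul_one]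
  · rw [tsum_mul_fourier_of_not_summable ha]
    exact continuous_const

variable {T : ℝ} [Fact (0 < T)]

lemma fourierCoeff_tsum_fourier {a : ℤ → ℂ} (ha : Summable a) (n : ℤ) :
    fourierCoeff (fun x : AddCircle T => ∑' k, a k * fourier k x) n = a n := by
  set F : ℤ → AddCircle T → ℂ := fun k x => fourier (-n) x * (a k * fourier k x)
  have hF_int : ∀ k, Integrable (F k) AddCircle.haarAddCircle := fun k =>
    ((fourier k).continuous.integrable_of_hasCompactSupport
      (HasCompactSupport.of_compactSpace _)).const_mul (a k) |>.fourier_smul (-n)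
  have hF_norm : ∀ k, ∫ x, ‖F k x‖ ∂AddCircle.haarAddCircle = ‖a k‖ := fun k => by
    simp only [F, norm_mul, norm_fourier_apply, one_mul, mul_one]
    simp
  calc fourierCoeff (fun x : AddCircle T => ∑' k, a k * fourier k x) n
      = ∫ x, ∑' k, F k x ∂AddCircle.haarAddCircle := by
        simp only [fourierCoeff, F, smul_eq_mul, tsum_mul_left]
    _ = ∑' k, a k * fourierCoeff (fourier k) n := by
        rw [← integral_tsum_of_summable_integral_norm hF_int
          (by simpa only [hF_norm] using ha.norm)]
        refine tsum_congr fun k => ?_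
        simp only [F, fourierCoeff, smul_eq_mul, ← integral_const_mul]
        congr 1 with x
        ring
    _ = a n := by
        simp [fourierCoeff_fourier, Pi.single_apply]

lemma norm_fourierCoeff_tsum_fourier_le (a : ℤ → ℂ) (n : ℤ) :
    ‖fourierCoeff (fun x : AddCircle T => ∑' k, a k * fourier k x) n‖ ≤ ‖a n‖ := by
  by_cases ha : Summable a
  · rw [fourierCoeff_tsum_fourier ha]
  · rw [tsum_mul_fourier_of_not_summable ha]
    simp [fourierCoeff]

lemma hasSum_sq_fourierCoeff_of_memLp {f : AddCircle T → ℂ} (hf : MemLp f 2) :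
    HasSum (fun k => ‖fourierCoeff f k‖ ^ 2) (∫ t, ‖f t‖ ^ 2 ∂AddCircle.haarAddCircle) := by
  have h := hf.haarAddCircle
  convert hasSum_sq_fourierCoeff h.toLp using 1
  · simp only [fourierCoeff_congr_ae h.coeFn_toLp]
  · exact integral_congr_ae (h.coeFn_toLp.mono fun x hx => by simp only [hx])

end FourierSeries

lemma Continuous.memLp_two {f : Torus → ℂ} (hf : Continuous f) : MemLp f 2 volume :=
  hf.memLp_of_hasCompactSupport (.of_compactSpace _)

lemma continuous_mult (m : ℤ → ℂ) (f : Torus → ℂ) : Continuous (mult m f) :=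
  continuous_tsum_fourier _

lemma integrable_mult (m : ℤ → ℂ) (f : Torus → ℂ) :
    Integrable (mult m f) AddCircle.haarAddCircle :=
  (continuous_mult m f).integrable_of_hasCompactSupport (.of_compactSpace _)

lemma memLp_mult (m : ℤ → ℂ) (f : Torus → ℂ) : MemLp (mult m f) 2 volume :=
  (continuous_mult m f).memLp_two

lemma fourierCoeff_mult {m : ℤ → ℂ} {f : Torus → ℂ}
    (h : Summable fun k => m k * fourierCoeff f k) (n : ℤ) :
    fourierCoeff (mult m f) n = m n * fourierCoeff f n :=
  fourierCoeff_tsum_fourier h n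

lemma norm_fourierCoeff_mult_le (m : ℤ → ℂ) (f : Torus → ℂ) (k : ℤ) :
    ‖fourierCoeff (mult m f) k‖ ≤ ‖m k‖ * ‖fourierCoeff f k‖ :=
  (norm_fourierCoeff_tsum_fourier_le _ k).trans_eq (norm_mul _ _)

lemma hasSum_sq_fourierCoeff_mass {f : Torus → ℂ} (hf : MemLp f 2 volume) :
    HasSum (fun k => ‖fourierCoeff f k‖ ^ 2) (mass f) := by
  convert hasSum_sq_fourierCoeff_of_memLp hf using 1
  rw [mass, AddCircle.integral_haarAddCircle, smul_eq_mul, one_div]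

lemma eLpNorm_le_eLpNorm_of_mass_le {f g : Torus → ℂ} (hf : MemLp f 2 volume)
    (hg : MemLp g 2 volume) (h : mass f ≤ mass g) :
    eLpNorm f 2 volume ≤ eLpNorm g 2 volume := by
  rw [hf.eLpNorm_eq_integral_rpow_norm two_ne_zero ENNReal.ofNat_ne_top,
    hg.eLpNorm_eq_integral_rpow_norm two_ne_zero ENNReal.ofNat_ne_top]
  simp only [ENNReal.toReal_ofNat, Real.rpow_two]
  have : ∫ x, ‖f x‖ ^ 2 ≤ ∫ x, ‖g x‖ ^ 2 :=
    le_of_mul_le_mul_left h (by positivity)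
  gcongr

lemma mass_le_mass_of_norm_fourierCoeff_le {f g : Torus → ℂ} (hf : MemLp f 2 volume)
    (hg : MemLp g 2 volume) (h : ∀ k, ‖fourierCoeff f k‖ ≤ ‖fourierCoeff g k‖) :
    mass f ≤ mass g :=
  hasSum_le (fun k => pow_le_pow_left₀ (norm_nonneg _) (h k) 2)
    (hasSum_sq_fourierCoeff_mass hf) (hasSum_sq_fourierCoeff_mass hg)

lemma mass_le_mass_of_split (S : Set ℤ) {f g : Torus → ℂ} (hf : MemLp f 2 volume)
    (hg : MemLp g 2 volume)
    (hS : ∑' k : S, ‖fourierCoeff f k‖ ^ 2 ≤ ∑' k : S, ‖fourierCoeff g k‖ ^ 2)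
    (hSc : ∀ k ∉ S, ‖fourierCoeff f k‖ ≤ ‖fourierCoeff g k‖) :
    mass f ≤ mass g := by
  have hsf := (hasSum_sq_fourierCoeff_mass hf).summable
  have hsg := (hasSum_sq_fourierCoeff_mass hg).summable
  rw [← (hasSum_sq_fourierCoeff_mass hf).tsum_eq, ← (hasSum_sq_fourierCoeff_mass hg).tsum_eq,
    ← (hsf.subtype S).tsum_add_tsum_compl (hsf.subtype Sᶜ),
    ← (hsg.subtype S).tsum_add_tsum_compl (hsg.subtype Sᶜ)]
  exact add_le_add hS <| Summable.tsum_le_tsum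
    (fun k => pow_le_pow_left₀ (norm_nonneg _) (hSc k k.2) 2) (hsf.subtype _) (hsg.subtype _)

lemma norm_fourierCoeff_linProp_le (t : ℝ) (f : Torus → ℂ) (k : ℤ) :
    ‖fourierCoeff (linProp t f) k‖ ≤ ‖fourierCoeff f k‖ := by
  have hm : ‖Complex.exp (Complex.I * t * (k : ℂ) ^ 2)‖ = 1 := by
    rw [show Complex.I * t * (k : ℂ) ^ 2 = ((t * k ^ 2 : ℝ) : ℂ) * Complex.I by push_cast; ring]
    exact Complex.norm_exp_ofReal_mul_I _
  exact (norm_fourierCoeff_mult_le _ f k).trans_eq (by rw [hm, one_mul])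

lemma mass_linProp_le (t : ℝ) {f : Torus → ℂ} (hf : MemLp f 2 volume) :
    mass (linProp t f) ≤ mass f :=
  mass_le_mass_of_norm_fourierCoeff_le (memLp_mult _ f) hf (norm_fourierCoeff_linProp_le t f)

def lowModes (N : ℝ) : Set ℤ := {k | (|k| : ℝ) ≤ N}

lemma lowModes_finite (N : ℝ) : (lowModes N).Finite :=
  (Set.finite_Icc (-⌊N⌋) ⌊N⌋).subset fun k hk =>
    abs_le.mp (Int.le_floor.mpr (by simpa [lowModes, Int.cast_abs] using hk))

lemma fourierCoeff_PiLe (N : ℝ) (f : Torus → ℂ) :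
    fourierCoeff (PiLe N f) = (lowModes N).indicator (fourierCoeff f) := by
  have hmul : (fun k : ℤ => (if (|k| : ℝ) ≤ N then 1 else 0) * fourierCoeff f k)
      = (lowModes N).indicator (fourierCoeff f) := by
    ext k
    by_cases hk : (|k| : ℝ) ≤ N <;> simp [lowModes, hk]
  ext k
  rw [PiLe, fourierCoeff_mult (hmul ▸ summable_of_hasFiniteSupport
    ((lowModes_finite N).subset (Set.support_indicator_subset))), ← hmul]

lemma mass_PiLe (N : ℝ) (f : Torus → ℂ) :
    mass (PiLe N f) = ∑' k : lowModes N, ‖fourierCoeff f k‖ ^ 2 := by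
  rw [← (hasSum_sq_fourierCoeff_mass (f := PiLe N f) (memLp_mult _ f)).tsum_eq,
    tsum_subtype (lowModes N) (fun k => ‖fourierCoeff f k‖ ^ 2), fourierCoeff_PiLe]
  congr 1 with k
  by_cases hk : k ∈ lowModes N <;> simp [hk]

lemma fourierCoeff_PiGt (N : ℝ) {A : Torus → ℂ} (hA : Integrable A AddCircle.haarAddCircle) :
    fourierCoeff (PiGt N A) = (lowModes N)ᶜ.indicator (fourierCoeff A) := by
  have hsplit : A = PiGt N A + PiLe N A := funext fun x => (sub_add_cancel _ _).symm
  have hcoeff := congrArg fourierCoeff hsplit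
  rw [fourierCoeff.add (f := PiGt N A) (g := PiLe N A) (hA.sub (integrable_mult _ A))
      (integrable_mult _ A),
    fourierCoeff_PiLe] at hcoeff
  rw [Set.indicator_compl]
  exact eq_sub_of_add_eq hcoeff.symm

lemma fourierCoeff_PiGt_add_PiLe (N : ℝ) {A : Torus → ℂ}
    (hA : Integrable A AddCircle.haarAddCircle) (F : Torus → ℂ) :
    fourierCoeff (fun x => PiGt N A x + PiLe N F x)
      = (lowModes N)ᶜ.indicator (fourierCoeff A) + (lowModes N).indicator (fourierCoeff F) := by
  rw [← fourierCoeff_PiGt N hA, ← fourierCoeff_PiLe]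
  exact fourierCoeff.add (f := PiGt N A) (hA.sub (integrable_mult _ A)) (integrable_mult _ F)

lemma norm_Nflow_apply (lam t : ℝ) (φ : Torus → ℂ) (x : Torus) :
    ‖Nflow lam t φ x‖ = ‖φ x‖ := by
  rw [Nflow, norm_mul, show -Complex.I * lam * t * ((‖φ x‖ ^ 2 : ℝ) : ℂ)
    = ((-(lam * t * ‖φ x‖ ^ 2) : ℝ) : ℂ) * Complex.I by push_cast; ring,
    Complex.norm_exp_ofReal_mul_I, one_mul]

lemma continuous_Nflow (lam t : ℝ) {φ : Torus → ℂ} (hφ : Continuous φ) :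
    Continuous (Nflow lam t φ) := by
  unfold Nflow
  fun_prop

lemma mass_Nflow (lam t : ℝ) (φ : Torus → ℂ) : mass (Nflow lam t φ) = mass φ := by
  simp only [mass, norm_Nflow_apply]

def schemeAStep (lam M0 τ N : ℝ) (f : Torus → ℂ) : Torus → ℂ := fun x =>
  PiGt N (linProp τ (fun y => Complex.exp (-(4 * π * M0 * τ) * Complex.I * lam) * f y)) x
    + PiLe N (linProp (τ / 2) (Nflow lam τ (linProp (τ / 2) (PiLe N f)))) x

lemma continuous_schemeAStep (lam M0 τ N : ℝ) (f : Torus → ℂ) :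
    Continuous (schemeAStep lam M0 τ N f) :=
  ((continuous_mult _ _).sub (continuous_mult _ _)).add (continuous_mult _ _)

lemma memLp_schemeAStep (lam M0 τ N : ℝ) (f : Torus → ℂ) :
    MemLp (schemeAStep lam M0 τ N f) 2 volume :=
  (continuous_schemeAStep lam M0 τ N f).memLp_two

lemma mass_schemeAStep_le (lam M0 τ N : ℝ) {f : Torus → ℂ} (hf : MemLp f 2 volume) :
    mass (schemeAStep lam M0 τ N f) ≤ mass f := by
  have hc : ‖Complex.exp (-(4 * π * M0 * τ) * Complex.I * lam)‖ = 1 := by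
    rw [show -(4 * π * M0 * τ) * Complex.I * lam = ((-(4 * π * M0 * τ * lam)) : ℝ) * Complex.I by
      push_cast; ring]
    exact Complex.norm_exp_ofReal_mul_I _
  set c : ℂ := Complex.exp (-(4 * π * M0 * τ) * Complex.I * lam)
  set A := linProp τ (fun y => c * f y)
  set ψ := linProp (τ / 2) (PiLe N f)
  set F := linProp (τ / 2) (Nflow lam τ ψ)
  have hcoeff : fourierCoeff (schemeAStep lam M0 τ N f)
      = (lowModes N)ᶜ.indicator (fourierCoeff A) + (lowModes N).indicator (fourierCoeff F) :=
    fourierCoeff_PiGt_add_PiLe N (integrable_mult _ _) F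
  refine mass_le_mass_of_split (lowModes N) (memLp_schemeAStep lam M0 τ N f) hf ?_ fun k hk => ?_
  · have hF := hasSum_sq_fourierCoeff_mass (memLp_mult _ (Nflow lam τ ψ) : MemLp F 2 volume)
    calc ∑' k : lowModes N, ‖fourierCoeff (schemeAStep lam M0 τ N f) k‖ ^ 2
        = ∑' k : lowModes N, ‖fourierCoeff F k‖ ^ 2 :=
          tsum_congr fun k => by simp [hcoeff, k.2]
      _ ≤ mass F := hF.tsum_eq ▸ hF.summable.tsum_subtype_le _ _ fun _ => by positivity
      _ ≤ mass (Nflow lam τ ψ) :=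
          mass_linProp_le _ (continuous_Nflow lam τ (continuous_mult _ _)).memLp_two
      _ = mass ψ := mass_Nflow lam τ ψ
      _ ≤ mass (PiLe N f) := mass_linProp_le _ (memLp_mult _ f)
      _ = ∑' k : lowModes N, ‖fourierCoeff f k‖ ^ 2 := mass_PiLe N f
  · calc ‖fourierCoeff (schemeAStep lam M0 τ N f) k‖
        = ‖fourierCoeff A k‖ := by simp [hcoeff, hk]
      _ ≤ ‖fourierCoeff (fun y => c * f y) k‖ := norm_fourierCoeff_linProp_le τ _ k
      _ = ‖fourierCoeff f k‖ := by rw [fourierCoeff.const_mul, norm_mul, hc, one_mul]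

theorem schemeA_mass_nonincreasing_general
    (lam M0 τ N : ℝ)
    (u0 : Torus → ℂ) (hu0 : MemLp u0 2 volume)
    (un : ℕ → Torus → ℂ) (hscheme : SchemeA lam M0 τ N u0 un) :
    (∀ n : ℕ, eLpNorm (un (n + 1)) 2 volume ≤ eLpNorm (un n) 2 volume) ∧
      ∀ n : ℕ, eLpNorm (un n) 2 volume ≤ eLpNorm u0 2 volume := by
  obtain ⟨h0, hstep⟩ := hscheme
  have hmem : ∀ n, MemLp (un n) 2 volume
    | 0 => h0 ▸ hu0
    | n + 1 => hstep n ▸ memLp_schemeAStep lam M0 τ N (un n)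
  have hdec : ∀ n, eLpNorm (un (n + 1)) 2 volume ≤ eLpNorm (un n) 2 volume := fun n => by
    rw [hstep n]
    exact eLpNorm_le_eLpNorm_of_mass_le (memLp_schemeAStep lam M0 τ N (un n)) (hmem n)
      (mass_schemeAStep_le lam M0 τ N (hmem n))
  have hanti : Antitone fun n => eLpNorm (un n) 2 volume := antitone_nat_of_succ_le hdec
  exact ⟨hdec, fun n => h0 ▸ hanti n.zero_le⟩

theorem schemeA_mass_nonincreasing
    (lam M0 τ N : ℝ) (hτ : 0 < τ) (hN : 1 ≤ N)
    (u0 : Torus → ℂ) (hu0 : MemLp u0 2 volume)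
    (un : ℕ → Torus → ℂ) (hscheme : SchemeA lam M0 τ N u0 un) :
    (∀ n : ℕ, eLpNorm (un (n + 1)) 2 volume ≤ eLpNorm (un n) 2 volume) ∧
      ∀ n : ℕ, eLpNorm (un n) 2 volume ≤ eLpNorm u0 2 volume :=
  schemeA_mass_nonincreasing_general lam M0 τ N u0 hu0 un hscheme
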